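/- If A and B are input types, then the product type A ∧ B = ∀X((A → (B → X)) → X), the disjoint sum type A ∨ B = ∀X((A → X) → ((B → X) → X)), and the list type LA = ∀X(X → ((A → (X → X)) → X)) are input types. -/

import Mathlib

/-!
Common development: pure λ-calculus in de Bruijn notation, β-reduction,
weak head reduction, types of system F (with type constants), the typing
systems F, F₀ (F without (∀e)) and the simple system S, saturated sets and
interpretations, and the notions of input / output / data types, following
Farkh-Nour, "Les types de données syntaxiques du système F".
-/

namespace FarkhNour

/-- Pure λ-terms, in de Bruijn notation. -/
inductive Trm : Type
  | var : ℕ → Trm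
  | app : Trm → Trm → Trm
  | lam : Trm → Trm

/-- Lift (shift) by `d` the free variables of a term, starting at index `k`. -/
def liftTrm (d : ℕ) : ℕ → Trm → Trm
  | k, .var n => if n < k then .var n else .var (n + d)
  | k, .app a b => .app (liftTrm d k a) (liftTrm d k b)
  | k, .lam a => .lam (liftTrm d (k + 1) a)

/-- β-substitution `t[u/k]` (the binder for `k` is consumed: variables above `k`
are decremented), as used in the β-reduction rule. -/
def substTrm : Trm → ℕ → Trm → Trm
  | .var n, k, u => if n < k then .var n else if n = k then liftTrm k 0 u else .var (n - 1)
  | .app a b, k, u => .app (substTrm a k u) (substTrm b k u)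
  | .lam a, k, u => .lam (substTrm a (k + 1) u)

/-- Named-style capture-avoiding substitution `t[u/x]` of the term `u` for the
free variable `x` of `t` : the other free variables are left unchanged. -/
def replaceVar : Trm → ℕ → Trm → Trm
  | .var n, k, u => if n = k then u else .var n
  | .app a b, k, u => .app (replaceVar a k u) (replaceVar b k u)
  | .lam a, k, u => .lam (replaceVar a (k + 1) (liftTrm 1 0 u))

/-- Lifting of a parallel substitution under a binder. -/
def liftSub (σ : ℕ → Trm) : ℕ → Trm
  | 0 => .var 0
  | n + 1 => liftTrm 1 0 (σ n)

/-- Simultaneous (parallel) capture-avoiding substitution. -/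
def msubst (σ : ℕ → Trm) : Trm → Trm
  | .var n => σ n
  | .app a b => .app (msubst σ a) (msubst σ b)
  | .lam a => .lam (msubst (liftSub σ) a)

/-- One step of β-reduction. -/
inductive BetaStep : Trm → Trm → Prop
  | beta (t u : Trm) : BetaStep (.app (.lam t) u) (substTrm t 0 u)
  | appL {t t' : Trm} (u : Trm) : BetaStep t t' → BetaStep (.app t u) (.app t' u)
  | appR (t : Trm) {u u' : Trm} : BetaStep u u' → BetaStep (.app t u) (.app t u')
  | lam {t t' : Trm} : BetaStep t t' → BetaStep (.lam t) (.lam t')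

/-- Many-step β-reduction `t →β t'`. -/
def BetaRed : Trm → Trm → Prop := Relation.ReflTransGen BetaStep

/-- β-equivalence `t ≃β t'`. -/
def BetaEq : Trm → Trm → Prop := Relation.EqvGen BetaStep

/-- A term is normal iff no β-reduction step applies to it. -/
def IsNormal (t : Trm) : Prop := ∀ u, ¬ BetaStep t u

/-- `FreeIn k t` : the variable (de Bruijn index) `k` occurs free in `t`. -/
def FreeIn : ℕ → Trm → Prop
  | k, .var n => n = k
  | k, .app a b => FreeIn k a ∨ FreeIn k b
  | k, .lam a => FreeIn (k + 1) a

/-- A closed term. -/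
def TrmClosed (t : Trm) : Prop := ∀ k, ¬ FreeIn k t

/-- One step of weak head reduction. -/
inductive WHStep : Trm → Trm → Prop
  | beta (t u : Trm) : WHStep (.app (.lam t) u) (substTrm t 0 u)
  | app {t t' : Trm} (u : Trm) : WHStep t t' → WHStep (.app t u) (.app t' u)

/-- Weak head reduction `t ≻_f t'`. -/
def WHRed : Trm → Trm → Prop := Relation.ReflTransGen WHStep

/-- Types of system F, in de Bruijn notation, with type constants
(the constant `0` is the distinguished constant `O`, the constant `1` is `⊥`). -/
inductive Ty : Type
  | var : ℕ → Ty
  | const : ℕ → Ty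
  | arr : Ty → Ty → Ty
  | all : Ty → Ty

/-- The distinguished type constant `O`. -/
def tyO : Ty := .const 0

/-- The distinguished type constant `⊥`. -/
def tyBot : Ty := .const 1

/-- Lift (shift) by `d` the free type variables, starting at index `k`. -/
def liftTy (d : ℕ) : ℕ → Ty → Ty
  | k, .var n => if n < k then .var n else .var (n + d)
  | _, .const c => .const c
  | k, .arr a b => .arr (liftTy d k a) (liftTy d k b)
  | k, .all a => .all (liftTy d (k + 1) a)

/-- Capture-avoiding type substitution `A[G/k]`. -/
def substTy : Ty → ℕ → Ty → Ty
  | .var n, k, G => if n < k then .var n else if n = k then liftTy k 0 G else .var (n - 1)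
  | .const c, _, _ => .const c
  | .arr a b, k, G => .arr (substTy a k G) (substTy b k G)
  | .all a, k, G => .all (substTy a (k + 1) G)

/-- `TyFreeIn k A` : the type variable `k` occurs free in `A`. -/
def TyFreeIn : ℕ → Ty → Prop
  | k, .var n => n = k
  | _, .const _ => False
  | k, .arr a b => TyFreeIn k a ∨ TyFreeIn k b
  | k, .all a => TyFreeIn (k + 1) a

/-- Boolean version of `TyFreeIn`. -/
def tyFreeInB : ℕ → Ty → Bool
  | k, .var n => n == k
  | _, .const _ => false
  | k, .arr a b => tyFreeInB k a || tyFreeInB k b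
  | k, .all a => tyFreeInB (k + 1) a

/-- A closed type. -/
def TyClosed (A : Ty) : Prop := ∀ k, ¬ TyFreeIn k A

/-- `ContainsConst c A` : the type constant `c` occurs in `A`. -/
def ContainsConst : ℕ → Ty → Prop
  | _, .var _ => False
  | c, .const c' => c' = c
  | c, .arr a b => ContainsConst c a ∨ ContainsConst c b
  | c, .all a => ContainsConst c a

/-- The typing judgment `Γ ⊢_F t : A` of system F, with rules
(ax), (→i), (→e), (∀i), (∀e). -/
inductive TypF : List Ty → Trm → Ty → Prop
  | var (Γ : List Ty) (n : ℕ) (A : Ty) : Γ[n]? = some A → TypF Γ (.var n) A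
  | abs {Γ : List Ty} {t : Trm} {B C : Ty} :
      TypF (B :: Γ) t C → TypF Γ (.lam t) (.arr B C)
  | app {Γ : List Ty} {u v : Trm} {B C : Ty} :
      TypF Γ u (.arr B C) → TypF Γ v B → TypF Γ (.app u v) C
  | allI {Γ : List Ty} {t : Trm} {A : Ty} :
      TypF (Γ.map (liftTy 1 0)) t A → TypF Γ t (.all A)
  | allE {Γ : List Ty} {t : Trm} {A : Ty} (G : Ty) :
      TypF Γ t (.all A) → TypF Γ t (substTy A 0 G)

/-- The typing judgment `Γ ⊢_{F₀} t : A` of system F₀, i.e. system F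
without the rule (∀e). -/
inductive TypF0 : List Ty → Trm → Ty → Prop
  | var (Γ : List Ty) (n : ℕ) (A : Ty) : Γ[n]? = some A → TypF0 Γ (.var n) A
  | abs {Γ : List Ty} {t : Trm} {B C : Ty} :
      TypF0 (B :: Γ) t C → TypF0 Γ (.lam t) (.arr B C)
  | app {Γ : List Ty} {u v : Trm} {B C : Ty} :
      TypF0 Γ u (.arr B C) → TypF0 Γ v B → TypF0 Γ (.app u v) C
  | allI {Γ : List Ty} {t : Trm} {A : Ty} :
      TypF0 (Γ.map (liftTy 1 0)) t A → TypF0 Γ t (.all A)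

/-- The typing judgment `Γ ⊢_S t : A` of the simple type system S,
with rules (ax), (→i), (→e) only. -/
inductive TypS : List Ty → Trm → Ty → Prop
  | var (Γ : List Ty) (n : ℕ) (A : Ty) : Γ[n]? = some A → TypS Γ (.var n) A
  | abs {Γ : List Ty} {t : Trm} {B C : Ty} :
      TypS (B :: Γ) t C → TypS Γ (.lam t) (.arr B C)
  | app {Γ : List Ty} {u v : Trm} {B C : Ty} :
      TypS Γ u (.arr B C) → TypS Γ v B → TypS Γ (.app u v) C

/-- Quantifier-free types (types of the simple type system S). -/
def QFree : Ty → Prop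
  | .var _ => True
  | .const _ => True
  | .arr a b => QFree a ∧ QFree b
  | .all _ => False

/-- An input type : a closed type all of whose normal inhabitants are
typable in system F₀. -/
def IsInputType (E : Ty) : Prop :=
  TyClosed E ∧ ∀ t : Trm, IsNormal t → TypF [] t E → TypF0 [] t E

/-- An output type : a closed type `S` not containing the constant `O` such
that for every normal term `t`, if `α : O ⊢_F t : S` then `α ∉ Fv(t)`. -/
def IsOutputType (S : Ty) : Prop :=
  TyClosed S ∧ ¬ ContainsConst 0 S ∧
    ∀ t : Trm, IsNormal t → TypF [tyO] t S → ¬ FreeIn 0 t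

/-- A syntactical data type : a closed type which is both input and output. -/
def IsSyntacticalDataType (D : Ty) : Prop := IsInputType D ∧ IsOutputType D

mutual
  /-- The ∀⁺ types (positive quantifiers). -/
  inductive PosTy : Ty → Prop
    | var (n : ℕ) : PosTy (.var n)
    | arr {B A : Ty} : NegTy B → PosTy A → PosTy (.arr B A)
    | all {A : Ty} : PosTy A → TyFreeIn 0 A → PosTy (.all A)
  /-- The ∀⁻ types (negative quantifiers). -/
  inductive NegTy : Ty → Prop
    | var (n : ℕ) : NegTy (.var n)
    | arr {B A : Ty} : PosTy B → NegTy A → NegTy (.arr B A)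
end

/-- `EndsInConst c A` : the type `A` ends in the type constant `c`. -/
inductive EndsInConst : ℕ → Ty → Prop
  | base (c : ℕ) : EndsInConst c (.const c)
  | arr {c : ℕ} {A : Ty} (B : Ty) : EndsInConst c A → EndsInConst c (.arr B A)
  | all {c : ℕ} {A : Ty} : EndsInConst c A → EndsInConst c (.all A)

/-- `EndsInVar k A` : the type `A` ends in the type variable `k`
(crossing a quantifier ∀X with X ≠ the variable is allowed). -/
inductive EndsInVar : ℕ → Ty → Prop
  | base (k : ℕ) : EndsInVar k (.var k)
  | arr {k : ℕ} {A : Ty} (B : Ty) : EndsInVar k A → EndsInVar k (.arr B A)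
  | all {k : ℕ} {A : Ty} : EndsInVar (k + 1) A → EndsInVar k (.all A)

/-- The side condition of the restricted rule (∀e)_F : the body `A` of `∀X A`
(the variable X having index `k`) is of the form
`∀X₀(A₁ → ∀X₁(A₂ → … → ∀X_{n-1}(A_n → ∀X_n Y)…))` with `Y = X` or one of the
`A_i` ending in `X`. -/
inductive FFForm : ℕ → Ty → Prop
  | base (k : ℕ) : FFForm k (.var k)
  | all {k : ℕ} {A : Ty} : FFForm (k + 1) A → FFForm k (.all A)
  | arrTail {k : ℕ} {C : Ty} (B : Ty) : FFForm k C → FFForm k (.arr B C)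
  | arrHit {k : ℕ} {B C : Ty} : EndsInVar k B → (∃ j, EndsInVar j C) →
      FFForm k (.arr B C)

/-- The typing judgment of system F_F : system F where the rule (∀e) is
replaced by the restricted rule (∀e)_F. -/
inductive TypFF : List Ty → Trm → Ty → Prop
  | var (Γ : List Ty) (n : ℕ) (A : Ty) : Γ[n]? = some A → TypFF Γ (.var n) A
  | abs {Γ : List Ty} {t : Trm} {B C : Ty} :
      TypFF (B :: Γ) t C → TypFF Γ (.lam t) (.arr B C)
  | app {Γ : List Ty} {u v : Trm} {B C : Ty} :
      TypFF Γ u (.arr B C) → TypFF Γ v B → TypFF Γ (.app u v) C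
  | allI {Γ : List Ty} {t : Trm} {A : Ty} :
      TypFF (Γ.map (liftTy 1 0)) t A → TypFF Γ t (.all A)
  | allE {Γ : List Ty} {t : Trm} {A : Ty} (G : Ty) :
      FFForm 0 A → TypFF Γ t (.all A) → TypFF Γ t (substTy A 0 G)

/-- An output type of system F_F. -/
def IsOutputTypeFF (S : Ty) : Prop :=
  TyClosed S ∧ ¬ ContainsConst 0 S ∧
    ∀ t : Trm, IsNormal t → TypFF [tyO] t S → ¬ FreeIn 0 t

/-- Saturated sets of λ-terms. -/
def Saturated (G : Set Trm) : Prop := ∀ t u : Trm, WHRed t u → u ∈ G → t ∈ G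

/-- `G → G'` on sets of λ-terms. -/
def SetArr (G G' : Set Trm) : Set Trm := {u : Trm | ∀ t ∈ G, Trm.app u t ∈ G'}

/-- Extension of an interpretation by a set for the (de Bruijn) variable 0. -/
def consEnv (G : Set Trm) (I : ℕ → Set Trm) : ℕ → Set Trm
  | 0 => G
  | n + 1 => I n

/-- The value `|A|_I` of a type in an interpretation (`C` interprets the
type constants, `I` the type variables). -/
def TyVal (C : ℕ → Set Trm) : Ty → (ℕ → Set Trm) → Set Trm
  | .var n, I => I n
  | .const c, _ => C c
  | .arr a b, I => SetArr (TyVal C a I) (TyVal C b I)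
  | .all a, I => {t : Trm | ∀ G : Set Trm, Saturated G → t ∈ TyVal C a (consEnv G I)}

/-- `|A|` : the intersection of the values of `A` under all interpretations
by saturated sets. -/
def TyGlobal (A : Ty) : Set Trm :=
  {t : Trm | ∀ C I : ℕ → Set Trm, (∀ c, Saturated (C c)) → (∀ n, Saturated (I n)) →
    t ∈ TyVal C A I}

/-- A data type in Krivine's sense : a closed type `A` with `|A| ≠ ∅` such that
every term of `|A|` β-reduces to a closed term. -/
def IsDataType (A : Ty) : Prop :=
  TyClosed A ∧ TyGlobal A ≠ ∅ ∧
    ∀ t ∈ TyGlobal A, ∃ t' : Trm, BetaRed t t' ∧ TrmClosed t'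

/-- The product type `A ∧ B = ∀X((A → (B → X)) → X)` (X fresh). -/
def tyAnd (A B : Ty) : Ty :=
  .all (.arr (.arr (liftTy 1 0 A) (.arr (liftTy 1 0 B) (.var 0))) (.var 0))

/-- The disjoint sum type `A ∨ B = ∀X((A → X) → ((B → X) → X))` (X fresh). -/
def tyOr (A B : Ty) : Ty :=
  .all (.arr (.arr (liftTy 1 0 A) (.var 0))
    (.arr (.arr (liftTy 1 0 B) (.var 0)) (.var 0)))

/-- The type `LA = ∀X(X → ((A → (X → X)) → X))` of lists of objects of `A`. -/
def tyList (A : Ty) : Ty :=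
  .all (.arr (.var 0)
    (.arr (.arr (liftTy 1 0 A) (.arr (.var 0) (.var 0))) (.var 0)))

/-- Negation `¬A = A → ⊥`. -/
def tyNeg (A : Ty) : Ty := .arr A tyBot

/-- The Gödel translation `A*` : every atomic subformula `R` is replaced
by `¬R`. -/
def godel : Ty → Ty
  | .var n => .arr (.var n) tyBot
  | .const c => .arr (.const c) tyBot
  | .arr a b => .arr (godel a) (godel b)
  | .all a => .all (godel a)

/-- `T` is a storage operator for the pair of types `(E, S)`. -/
def IsStorageOpPair (T : Trm) (E S : Ty) : Prop :=
  TrmClosed T ∧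
    ∀ t : Trm, TypF [] t E →
      ∃ τ τ' : Trm, BetaEq τ τ' ∧ TypF [] τ' S ∧
        ∀ θ : Trm, BetaEq θ t →
          ∀ f : ℕ, ¬ FreeIn f θ → ¬ FreeIn f τ →
            ∃ σ : ℕ → Trm,
              WHRed (.app (.app T θ) (.var f)) (.app (.var f) (msubst σ τ))

/-- `T` is a storage operator for the type `D`. -/
def IsStorageOp (T : Trm) (D : Ty) : Prop := IsStorageOpPair T D D

/-- The term `λx₁…λxₙ.α` (n-fold abstraction over the free variable `α`). -/
def nlam (n a : ℕ) : Trm := Trm.lam^[n] (Trm.var (a + n))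

/-- The term `p_n = λx₁…λxₙλx.x`. -/
def pTrm (n : ℕ) : Trm := Trm.lam^[n] (Trm.lam (Trm.var 0))

/-- `B₁ → … → B_n → A`. -/
def mkArr (Bs : List Ty) (A : Ty) : Ty := Bs.foldr Ty.arr A

/-- The length `Lg(E)` of a type : the number of occurrences of `→` in it. -/
def Lg : Ty → ℕ
  | .var _ => 0
  | .const _ => 0
  | .arr a b => Lg a + Lg b + 1
  | .all a => Lg a

/-- `SubtypeOf A E` : `A` is a subtype (subformula) of `E`. -/
inductive SubtypeOf : Ty → Ty → Prop
  | refl (A : Ty) : SubtypeOf A A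
  | arrL {A B C : Ty} : SubtypeOf A B → SubtypeOf A (.arr B C)
  | arrR {A B C : Ty} : SubtypeOf A C → SubtypeOf A (.arr B C)
  | all {A B : Ty} : SubtypeOf A B → SubtypeOf A (.all B)

/-- `InAppPos k t` : the variable `k` occurs in application (function)
position in `t`, i.e. some subterm of `t` is of the form `(k)u`. -/
def InAppPos : ℕ → Trm → Prop
  | _, .var _ => False
  | k, .app u v => u = .var k ∨ InAppPos k u ∨ InAppPos k v
  | k, .lam u => InAppPos (k + 1) u

/-- The simple translation `A^s` : `X^s = X`, `(B → C)^s = B^s → C^s`,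
`(∀X B)^s = B^s` (the variables freed by erasing the quantifiers are collapsed
onto the type variable `0`). `d` counts the erased quantifiers. -/
def eraseTyAux : ℕ → Ty → Ty
  | d, .var n => .var (n - d)
  | _, .const c => .const c
  | d, .arr a b => .arr (eraseTyAux d a) (eraseTyAux d b)
  | d, .all a => eraseTyAux (d + 1) a

/-- The simple translation `A^s`. -/
def eraseTy : Ty → Ty := eraseTyAux 0

/-- The identity term `λx.x`. -/
def idTrm : Trm := .lam (.var 0)

/-- The boolean `𝟙 = λxλy.x`. -/
def oneTrm : Trm := .lam (.lam (.var 1))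

/-- The pair of λ-terms `(T_F, T'_F)` associated with a type `F` (the
distinguished variable `X` having de Bruijn index `k`; the term variable `α`
is the free term variable `0`):
`T_F = T'_F = λx.x` if `X ∉ Fv(F)`;
`T_X = λxλβλg.(g)xα`, `T'_X = λx.(x)α𝟙`;
`T_{C→D} = λxλy.(T_D)(x)(T'_C)y`, `T'_{C→D} = λxλy.(T'_D)(x)(T_C)y`;
`T_{∀Y B} = λx.(T_B)x`, `T'_{∀Y B} = λx.(T'_B)x`. -/
def TTpair : ℕ → Ty → Trm × Trm
  | k, .var n =>
      if n = k then
        (.lam (.lam (.lam (.app (.app (.var 0) (.var 2)) (.var 3)))),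
         .lam (.app (.app (.var 0) (.var 1)) oneTrm))
      else (idTrm, idTrm)
  | _, .const _ => (idTrm, idTrm)
  | k, .arr C D =>
      if tyFreeInB k (.arr C D) then
        (.lam (.lam (.app (liftTrm 2 0 (TTpair k D).1)
            (.app (.var 1) (.app (liftTrm 2 0 (TTpair k C).2) (.var 0))))),
         .lam (.lam (.app (liftTrm 2 0 (TTpair k D).2)
            (.app (.var 1) (.app (liftTrm 2 0 (TTpair k C).1) (.var 0))))))
      else (idTrm, idTrm)
  | k, .all B =>
      if tyFreeInB k (.all B) then
        (.lam (.app (liftTrm 1 0 (TTpair (k + 1) B).1) (.var 0)),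
         .lam (.app (liftTrm 1 0 (TTpair (k + 1) B).2) (.var 0)))
      else (idTrm, idTrm)

/-!
Each of the three types is `∀X (U₁ → … → Uₙ → X)` where every `Uᵢ` is a constructor type
`P₁ → … → Pₘ → X` whose parameters `Pⱼ` are `X` or input types. A normal inhabitant is `λu.t`
with `t` typed in a context of constructor types, and by induction on `t` every spine
`x w₁ … wₖ` has an F₀ type of which its F type is a generalization: the arguments of type `X`
are handled by induction, those of an input type `P` by the following observation.

A normal `v` with `Γ ⊢_F v : P` is closed, hence `⊢_{F₀} v : P`. Otherwise substitute
`(∀Y Y) → O` for `X`: every variable of `Γ` then has a type `P₁ → … → Pₘ → (∀Y Y) → O`,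
inhabited by `λx₁…λxₘ.δ` with `δ = λx.(x)x`, and replacing the maximal spines headed by these
variables accordingly gives a closed normal term of type `P` containing `δ`. Such a term has no
F₀ typing, whereas `P` is an input type.
-/

def NotLam (t : Trm) : Prop := ∀ b, t ≠ .lam b

def headVar : Trm → ℕ
  | .var n => n
  | .app u _ => headVar u
  | .lam _ => 0

lemma isNormal_var (n : ℕ) : IsNormal (.var n) := nofun

lemma isNormal_lam_iff {b : Trm} : IsNormal (.lam b) ↔ IsNormal b :=
  ⟨fun h u hu => h _ (.lam hu), fun h _ hu => by cases hu with | lam hu => exact h _ hu⟩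

lemma isNormal_app_iff {u v : Trm} :
    IsNormal (.app u v) ↔ IsNormal u ∧ IsNormal v ∧ NotLam u := by
  refine ⟨fun h => ⟨fun w hw => h _ (.appL _ hw), fun w hw => h _ (.appR _ hw), ?_⟩, ?_⟩
  · rintro b rfl
    exact h _ (.beta b v)
  · rintro ⟨hu, hv, hnl⟩ w hw
    cases hw with
    | beta b => exact hnl b rfl
    | appL _ hw => exact hu _ hw
    | appR _ hw => exact hv _ hw

lemma freeIn_headVar {a : Trm} (ha : IsNormal a) (hnl : NotLam a) : FreeIn (headVar a) a := by
  induction a with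
  | var n => rfl
  | app u v ih _ =>
    obtain ⟨hu, -, hnlu⟩ := isNormal_app_iff.mp ha
    exact Or.inl (ih hu hnlu)
  | lam b _ => exact absurd rfl (hnl b)

lemma liftTy_zero (A : Ty) (k : ℕ) : liftTy 0 k A = A := by
  induction A generalizing k <;> simp_all [liftTy]

lemma liftTy_of_notFree {A : Ty} {k : ℕ} (h : ∀ j, k ≤ j → ¬ TyFreeIn j A) (d : ℕ) :
    liftTy d k A = A := by
  induction A generalizing k with
  | var n => have := h n; simp_all [liftTy, TyFreeIn]
  | const c => rfl
  | arr a b iha ihb =>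
    simp only [liftTy, TyFreeIn, not_or] at h ⊢
    rw [iha fun j hj => (h j hj).1, ihb fun j hj => (h j hj).2]
  | all a ih =>
    simp only [liftTy]
    rw [ih fun j hj hf => h (j - 1) (by omega) (by simpa [TyFreeIn, show j - 1 + 1 = j by omega])]

lemma substTy_of_notFree {A : Ty} {k : ℕ} (h : ∀ j, k ≤ j → ¬ TyFreeIn j A) (G : Ty) :
    substTy A k G = A := by
  induction A generalizing k with
  | var n => have := h n; simp_all [substTy, TyFreeIn]
  | const c => rfl
  | arr a b iha ihb =>
    simp only [substTy, TyFreeIn, not_or] at h ⊢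
    rw [iha fun j hj => (h j hj).1, ihb fun j hj => (h j hj).2]
  | all a ih =>
    simp only [substTy]
    rw [ih fun j hj hf => h (j - 1) (by omega) (by simpa [TyFreeIn, show j - 1 + 1 = j by omega])]

lemma TyClosed.liftTy_eq {A : Ty} (h : TyClosed A) (d k : ℕ) : liftTy d k A = A :=
  liftTy_of_notFree (fun j _ => h j) d

lemma TyClosed.substTy_eq {A : Ty} (h : TyClosed A) (k : ℕ) (G : Ty) : substTy A k G = A :=
  substTy_of_notFree (fun j _ => h j) G

lemma map_liftTy_eq_self {Γ : List Ty} (h : ∀ E ∈ Γ, TyClosed E) : Γ.map (liftTy 1 0) = Γ :=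
  (List.map_congr_left fun E hE => (h E hE).liftTy_eq 1 0).trans (List.map_id Γ)

lemma liftTy_liftTy (A : Ty) {d e m k : ℕ} (h₁ : k ≤ m) (h₂ : m ≤ k + e) :
    liftTy d m (liftTy e k A) = liftTy (d + e) k A := by
  induction A generalizing m k with
  | var n => simp only [liftTy]; split_ifs <;> simp only [liftTy] <;> split_ifs <;> simp <;> omega
  | const c => rfl
  | arr a b iha ihb => simp only [liftTy, iha h₁ h₂, ihb h₁ h₂]
  | all a ih => simp only [liftTy, ih (m := m + 1) (k := k + 1) (by omega) (by omega)]

lemma liftTy_comm (A : Ty) {a b : ℕ} (h : b ≤ a) :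
    liftTy 1 b (liftTy 1 a A) = liftTy 1 (a + 1) (liftTy 1 b A) := by
  induction A generalizing a b with
  | var n => simp only [liftTy]; split_ifs <;> simp only [liftTy] <;> split_ifs <;> simp <;> omega
  | const c => rfl
  | arr x y ihx ihy => simp only [liftTy, ihx h, ihy h]
  | all x ih => simp only [liftTy, ih (a := a + 1) (b := b + 1) (by omega)]

lemma lg_liftTy (A : Ty) (d k : ℕ) : Lg (liftTy d k A) = Lg A := by
  induction A generalizing k with
  | var n => simp only [liftTy]; split_ifs <;> rfl
  | const c => rfl
  | arr a b iha ihb => simp only [liftTy, Lg, iha, ihb]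
  | all a ih => simp only [liftTy, Lg, ih]

lemma substTy_liftTy_of_le (A : Ty) {p k m : ℕ} (h₁ : k ≤ m) (h₂ : m < k + p) (G : Ty) :
    substTy (liftTy p k A) m G = liftTy (p - 1) k A := by
  induction A generalizing k m with
  | var n =>
    simp only [liftTy]
    split_ifs <;> simp only [substTy] <;> split_ifs <;> (try simp) <;> omega
  | const c => rfl
  | arr a b iha ihb => simp only [liftTy, substTy, iha h₁ h₂, ihb h₁ h₂]
  | all a ih => simp only [liftTy, substTy, ih (k := k + 1) (m := m + 1) (by omega) (by omega)]

lemma substTy_liftTy_self (A : Ty) (k : ℕ) (G : Ty) : substTy (liftTy 1 k A) k G = A := by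
  rw [substTy_liftTy_of_le A le_rfl (by omega), liftTy_zero]

lemma substTy_liftTy (B : Ty) {d m k : ℕ} (h : m ≤ k) (G : Ty) :
    substTy (liftTy d m B) (k + d) G = liftTy d m (substTy B k G) := by
  induction B generalizing m k with
  | var n =>
    simp only [liftTy, substTy]
    split_ifs <;> simp only [substTy, liftTy] <;> split_ifs <;> (try simp) <;> try omega
    subst_vars
    rw [liftTy_liftTy G (Nat.zero_le m) (by omega), Nat.add_comm]
  | const c => rfl
  | arr a b iha ihb => simp only [liftTy, substTy, iha h, ihb h]
  | all a ih =>
    simp only [liftTy, substTy, show k + d + 1 = k + 1 + d by omega,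
      ih (m := m + 1) (k := k + 1) (by omega)]

lemma substTy_substTy (A : Ty) (j k : ℕ) (G G₀ : Ty) :
    substTy (substTy A j G₀) (j + k) G = substTy (substTy A (j + k + 1) G) j (substTy G₀ k G) := by
  induction A generalizing j with
  | var n =>
    simp only [substTy]
    split_ifs <;> (try simp only [substTy]) <;> (try split_ifs) <;> (try simp) <;> try omega
    · simpa [Nat.add_comm] using substTy_liftTy G₀ (d := j) (Nat.zero_le k) G
    · rw [substTy_liftTy_of_le G (Nat.zero_le j) (by omega)]
      simp
  | const c => rfl
  | arr a b iha ihb => simp only [substTy, iha, ihb]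
  | all a ih => simp only [substTy, show j + k + 1 = j + 1 + k by omega, ih (j + 1)]

lemma map_substTy_map_liftTy (Γ : List Ty) (k : ℕ) (G : Ty) :
    (Γ.map (liftTy 1 0)).map (substTy · (k + 1) G) = (Γ.map (substTy · k G)).map (liftTy 1 0) := by
  simp only [List.map_map]
  exact List.map_congr_left fun B _ => substTy_liftTy B (Nat.zero_le k) G

lemma TypF.map_substTy {Γ : List Ty} {t : Trm} {A : Ty} (h : TypF Γ t A) (k : ℕ) (G : Ty) :
    TypF (Γ.map (substTy · k G)) t (substTy A k G) := by
  induction h generalizing k with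
  | var Γ n A hA => exact .var _ _ _ (by simp [hA])
  | abs _ ih => exact .abs (ih k)
  | app _ _ ihu ihv => exact .app (ihu k) (ihv k)
  | allI _ ih => exact .allI (map_substTy_map_liftTy .. ▸ ih (k + 1))
  | @allE _ _ A G₀ _ ih =>
    have hcomm := substTy_substTy A 0 k G G₀
    rw [Nat.zero_add] at hcomm
    exact hcomm ▸ (ih k).allE (substTy G₀ k G)

lemma TypF0.map_substTy {Γ : List Ty} {t : Trm} {A : Ty} (h : TypF0 Γ t A) (k : ℕ) (G : Ty) :
    TypF0 (Γ.map (substTy · k G)) t (substTy A k G) := by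
  induction h generalizing k with
  | var Γ n A hA => exact .var _ _ _ (by simp [hA])
  | abs _ ih => exact .abs (ih k)
  | app _ _ ihu ihv => exact .app (ihu k) (ihv k)
  | allI _ ih => exact .allI (map_substTy_map_liftTy .. ▸ ih (k + 1))

lemma TypF0.unlift {Γ : List Ty} {t : Trm} {S : Ty}
    (h : TypF0 (Γ.map (liftTy 1 0)) t (liftTy 1 0 S)) : TypF0 Γ t S := by
  simpa [List.map_map, Function.comp_def, substTy_liftTy_self] using h.map_substTy 0 (.var 0)

lemma TypF0.append {Γ : List Ty} {t : Trm} {A : Ty} (h : TypF0 Γ t A) (Γ' : List Ty) :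
    TypF0 (Γ ++ Γ') t A := by
  induction h generalizing Γ' with
  | var Γ n A hA =>
    exact .var _ _ _ (by rwa [List.getElem?_append_left (List.getElem?_eq_some_iff.mp hA).1])
  | abs _ ih => exact .abs (ih Γ')
  | app _ _ ihu ihv => exact .app (ihu Γ') (ihv Γ')
  | allI _ ih => exact .allI (by simpa using ih (Γ'.map (liftTy 1 0)))

lemma TypF.freeIn_lt {Γ : List Ty} {t : Trm} {A : Ty} (h : TypF Γ t A) {k : ℕ} (hk : FreeIn k t) :
    k < Γ.length := by
  induction h generalizing k with
  | var Γ n A hA => exact hk ▸ (List.getElem?_eq_some_iff.mp hA).1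
  | abs _ ih => simpa using ih hk
  | app _ _ ihu ihv => exact hk.elim ihu ihv
  | allI _ ih => simpa using ih hk
  | allE _ _ ih => exact ih hk

lemma TypF.exists_mem_of_var {Δ Γ₂ : List Ty} {n : ℕ} {W : Ty} (h : TypF (Δ ++ Γ₂) (.var n) W)
    (hn : Δ.length ≤ n) : ∃ E ∈ Γ₂, (Δ ++ Γ₂)[n]? = some E := by
  have hE := List.getElem?_eq_getElem (h.freeIn_lt rfl)
  exact ⟨_, List.mem_of_getElem? (List.getElem?_append_right hn ▸ hE), hE⟩

lemma TypF.strengthen {Δ Γ : List Ty} {t : Trm} {A : Ty} (h : TypF (Δ ++ Γ) t A)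
    (ht : ∀ k, FreeIn k t → k < Δ.length) : TypF Δ t A := by
  generalize hΘ : Δ ++ Γ = Θ at h
  induction h generalizing Δ Γ with
  | var Θ n A hA =>
    subst hΘ
    exact .var _ _ _ (by rwa [List.getElem?_append_left (ht n rfl)] at hA)
  | abs _ ih =>
    subst hΘ
    refine .abs (ih (Δ := _ :: Δ) (fun k hk => ?_) rfl)
    cases k with
    | zero => simp
    | succ k => simpa using ht k hk
  | app _ _ ihu ihv =>
    exact .app (ihu (fun k hk => ht k (.inl hk)) hΘ) (ihv (fun k hk => ht k (.inr hk)) hΘ)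
  | allI _ ih =>
    subst hΘ
    exact .allI (ih (by simpa using ht) (List.map_append ..).symm)
  | allE G _ ih => exact .allE G (ih ht hΘ)

def NotAll (A : Ty) : Prop := ∀ B, A ≠ .all B

lemma NotAll.lift {A : Ty} (h : NotAll A) (d k : ℕ) : NotAll (liftTy d k A) := by
  cases A with
  | var n => simp only [liftTy]; split_ifs <;> nofun
  | all a => exact absurd rfl (h a)
  | _ => nofun

/-- `GenClo A W`: `W = ∀X₁…∀Xₖ A`, the variables of `A` being shifted past the new binders. -/
inductive GenClo : Ty → Ty → Prop
  | refl (A : Ty) : GenClo A A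
  | all {A B : Ty} : GenClo (liftTy 1 0 A) B → GenClo A (.all B)

namespace GenClo

lemma substTy_of_liftTy {A B : Ty} {k : ℕ} (h : GenClo (liftTy 1 k A) B) (G : Ty) :
    GenClo A (substTy B k G) := by
  generalize hA : liftTy 1 k A = A' at h
  induction h generalizing A k with
  | refl => subst hA; rw [substTy_liftTy_self]; exact .refl A
  | all _ ih => exact .all (ih (k := k + 1) (by rw [← hA, liftTy_comm A (Nat.zero_le k)]))

lemma inst {A B : Ty} (hA : NotAll A) (h : GenClo A (.all B)) (G : Ty) :
    GenClo A (substTy B 0 G) := by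
  cases h with
  | refl => exact absurd rfl (hA B)
  | all h => exact h.substTy_of_liftTy G

lemma eq_of_notAll {A W : Ty} (h : GenClo A W) (hW : NotAll W) : A = W := by
  cases h with
  | refl => rfl
  | all => exact absurd rfl (hW _)

lemma all_of_closed {S A : Ty} (hS : TyClosed S) (h : GenClo S A) : GenClo S (.all A) :=
  .all (by rwa [hS.liftTy_eq])

lemma lg_eq {A W : Ty} (h : GenClo A W) : Lg A = Lg W := by
  induction h with
  | refl => rfl
  | all _ ih => rw [Lg, ← ih, lg_liftTy]

lemma typF {S W : Ty} (h : GenClo S W) (hS : TyClosed S) {c : Trm} (hc : ∀ Γ, TypF Γ c S)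
    (Γ : List Ty) : TypF Γ c W := by
  induction h generalizing Γ with
  | refl => exact hc Γ
  | all _ ih => exact .allI (ih (by rwa [hS.liftTy_eq]) (by rwa [hS.liftTy_eq]) _)

end GenClo

lemma TypF.genClo_of_var {Γ : List Ty} {n : ℕ} {A W : Ty} (h : TypF Γ (.var n) W)
    (hn : Γ[n]? = some A) (hA : NotAll A) : GenClo A W := by
  generalize ht : Trm.var n = t at h
  induction h generalizing A with
  | var Γ m B hB => cases ht; rw [hn] at hB; cases hB; exact .refl _
  | abs => cases ht
  | app => cases ht
  | allI _ ih => exact .all (ih (by simp [hn]) (hA.lift 1 0) ht)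
  | allE G _ ih => exact (ih hn hA ht).inst hA G

/-- The premises of the syntax-directed rule (ax), (→i) or (→e) that concludes `Γ ⊢ t : W`. -/
def TypFRule : List Ty → Trm → Ty → Prop
  | Γ, .var n, W => Γ[n]? = some W
  | Γ, .lam b, W => ∃ C D, W = .arr C D ∧ TypF (C :: Γ) b D
  | Γ, .app u v, W => ∃ C, TypF Γ u (.arr C W) ∧ TypF Γ v C

theorem TypF.induction_append {Γ₂ : List Ty} (hΓ₂ : Γ₂.map (liftTy 1 0) = Γ₂) {t : Trm}
    {motive : List Ty → Ty → Prop}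
    (rule : ∀ Δ W, TypFRule (Δ ++ Γ₂) t W → motive Δ W)
    (all : ∀ Δ A, motive (Δ.map (liftTy 1 0)) A → motive Δ (.all A))
    (inst : ∀ Δ A G, motive Δ (.all A) → motive Δ (substTy A 0 G))
    {Δ : List Ty} {W : Ty} (h : TypF (Δ ++ Γ₂) t W) : motive Δ W := by
  generalize hΓ : Δ ++ Γ₂ = Γ at h
  induction h generalizing Δ with
  | var _ _ _ hA => subst hΓ; exact rule _ _ hA
  | abs hb => subst hΓ; exact rule _ _ ⟨_, _, rfl, hb⟩
  | app hu hv => subst hΓ; exact rule _ _ ⟨_, hu, hv⟩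
  | allI _ ih => subst hΓ; exact all _ _ (ih rule (by rw [List.map_append, hΓ₂]))
  | allE G _ ih => exact inst _ _ G (ih rule hΓ)

theorem TypF.induction_rule {t : Trm} {motive : List Ty → Ty → Prop}
    (rule : ∀ Γ W, TypFRule Γ t W → motive Γ W)
    (all : ∀ Γ A, motive (Γ.map (liftTy 1 0)) A → motive Γ (.all A))
    (inst : ∀ Γ A G, motive Γ (.all A) → motive Γ (substTy A 0 G))
    {Γ : List Ty} {W : Ty} (h : TypF Γ t W) : motive Γ W :=
  TypF.induction_append (Γ₂ := []) rfl (fun Δ W h => rule Δ W (by simpa using h)) all inst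
    (by simpa using h)

inductive LamTy : List Ty → Trm → Ty → Prop
  | arr {Γ : List Ty} {b : Trm} {C D : Ty} : TypF (C :: Γ) b D → LamTy Γ b (.arr C D)
  | all {Γ : List Ty} {b : Trm} {A : Ty} : LamTy (Γ.map (liftTy 1 0)) b A → LamTy Γ b (.all A)

namespace LamTy

lemma map_substTy {Γ : List Ty} {b : Trm} {A : Ty} (h : LamTy Γ b A) (k : ℕ) (G : Ty) :
    LamTy (Γ.map (substTy · k G)) b (substTy A k G) := by
  induction h generalizing k with
  | arr hb => exact .arr (hb.map_substTy k G)
  | all _ ih => exact .all (map_substTy_map_liftTy .. ▸ ih (k + 1))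

lemma inst {Γ : List Ty} {b : Trm} {A : Ty} (h : LamTy Γ b (.all A)) (G : Ty) :
    LamTy Γ b (substTy A 0 G) := by
  cases h with
  | all h => simpa [List.map_map, Function.comp_def, substTy_liftTy_self] using h.map_substTy 0 G

lemma typF {Γ : List Ty} {b : Trm} {A : Ty} (h : LamTy Γ b A) : TypF Γ (.lam b) A := by
  induction h with
  | arr hb => exact .abs hb
  | all _ ih => exact .allI ih

end LamTy

lemma TypF.lamTy {Γ : List Ty} {b : Trm} {W : Ty} (h : TypF Γ (.lam b) W) : LamTy Γ b W :=
  h.induction_rule (t := .lam b) (motive := fun Γ W => LamTy Γ b W)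
    (fun _ _ ⟨_, _, hW, hb⟩ => hW ▸ .arr hb) (fun _ _ => .all) (fun _ _ G h => h.inst G)

lemma TypF0.genClo_of_var {Γ : List Ty} {n : ℕ} {W : Ty} (h : TypF0 Γ (.var n) W) :
    ∃ A, Γ[n]? = some A ∧ GenClo A W := by
  generalize ht : Trm.var n = t at h
  induction h with
  | var Γ m A hA => cases ht; exact ⟨A, hA, .refl A⟩
  | abs => cases ht
  | app => cases ht
  | allI _ ih =>
    obtain ⟨A, hA, hclo⟩ := ih ht
    obtain ⟨A₀, hA₀, rfl⟩ := Option.map_eq_some_iff.mp (List.getElem?_map .. ▸ hA)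
    exact ⟨A₀, hA₀, .all hclo⟩

lemma TypF0.exists_of_app {Γ : List Ty} {u v : Trm} {W : Ty} (h : TypF0 Γ (.app u v) W) :
    ∃ Γ' C W', TypF0 Γ' u (.arr C W') ∧ TypF0 Γ' v C := by
  generalize ht : Trm.app u v = t at h
  induction h with
  | app hu hv => cases ht; exact ⟨_, _, _, hu, hv⟩
  | allI _ ih => exact ih ht
  | _ => cases ht

lemma TypF0.exists_of_lam {Γ : List Ty} {b : Trm} {W : Ty} (h : TypF0 Γ (.lam b) W) :
    ∃ Γ' W', TypF0 Γ' b W' := by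
  generalize ht : Trm.lam b = t at h
  induction h with
  | abs hb => cases ht; exact ⟨_, _, hb⟩
  | allI _ ih => exact ih ht
  | _ => cases ht

def F0Untypable (t : Trm) : Prop := ∀ Γ W, ¬ TypF0 Γ t W

namespace F0Untypable

lemma app_left {u : Trm} (h : F0Untypable u) (v : Trm) : F0Untypable (.app u v) := fun _ _ ht =>
  let ⟨_, _, _, hu, _⟩ := ht.exists_of_app
  h _ _ hu

lemma app_right {v : Trm} (u : Trm) (h : F0Untypable v) : F0Untypable (.app u v) := fun _ _ ht =>
  let ⟨_, _, _, _, hv⟩ := ht.exists_of_app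
  h _ _ hv

lemma lam {b : Trm} (h : F0Untypable b) : F0Untypable (.lam b) := fun _ _ ht =>
  let ⟨_, _, hb⟩ := ht.exists_of_lam
  h _ _ hb

end F0Untypable

/-- Without (∀e) a variable keeps the arrow count of its declared type, so it cannot be applied
to itself. -/
lemma f0Untypable_selfApp (n : ℕ) : F0Untypable (.app (.var n) (.var n)) := fun _ _ h => by
  obtain ⟨_, C, W, hu, hv⟩ := h.exists_of_app
  obtain ⟨A, hA, hcloA⟩ := hu.genClo_of_var
  obtain ⟨A', hA', hcloA'⟩ := hv.genClo_of_var
  obtain rfl : A = A' := Option.some_injective _ (hA.symm.trans hA')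
  obtain rfl := hcloA.eq_of_notAll nofun
  have := hcloA'.lg_eq
  rw [Lg] at this
  omega

def tyFalse : Ty := .all (.var 0)

def tyDelta : Ty := .arr tyFalse tyO

def delta : Trm := .lam (.app (.var 0) (.var 0))

def lamsDelta : ℕ → Trm
  | 0 => delta
  | n + 1 => .lam (lamsDelta n)

lemma TypF.of_tyFalse {Γ : List Ty} {t : Trm} (h : TypF Γ t tyFalse) (G : Ty) : TypF Γ t G := by
  simpa [substTy, liftTy_zero] using h.allE G

lemma typF_lamsDelta (Ps Γ : List Ty) : TypF Γ (lamsDelta Ps.length) (mkArr Ps tyDelta) := by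
  induction Ps generalizing Γ with
  | nil =>
    have hx : TypF (tyFalse :: Γ) (.var 0) tyFalse := .var _ _ _ rfl
    exact .abs (.app (hx.of_tyFalse _) hx)
  | cons P Ps ih => exact .abs (ih _)

lemma isNormal_delta : IsNormal delta :=
  isNormal_lam_iff.mpr (isNormal_app_iff.mpr ⟨isNormal_var 0, isNormal_var 0, nofun⟩)

lemma isNormal_lamsDelta (n : ℕ) : IsNormal (lamsDelta n) := by
  induction n with
  | zero => exact isNormal_delta
  | succ n ih => exact isNormal_lam_iff.mpr ih

lemma f0Untypable_delta : F0Untypable delta := (f0Untypable_selfApp 0).lam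

lemma f0Untypable_lamsDelta (n : ℕ) : F0Untypable (lamsDelta n) := by
  induction n with
  | zero => exact f0Untypable_delta
  | succ n ih => exact ih.lam

def IsDeltaArrow (E : Ty) : Prop := ∃ Ps, E = mkArr Ps tyDelta ∧ TyClosed E

/-- The types of the spines `x w₁ … wₖ` with `x` of a type `P₁ → … → Pₘ → tyDelta`. -/
def DeltaSpine (S : Ty) : Prop := IsDeltaArrow S ∨ S = tyO

namespace DeltaSpine

lemma closed {S : Ty} (h : DeltaSpine S) : TyClosed S := by
  rcases h with ⟨_, _, h⟩ | rfl
  · exact h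
  · exact nofun

lemma notAll {S : Ty} (h : DeltaSpine S) : NotAll S := by
  rcases h with ⟨_ | _, rfl, _⟩ | rfl <;> nofun

lemma arr_inv {C W : Ty} (h : DeltaSpine (.arr C W)) : C = tyFalse ∧ W = tyO ∨ IsDeltaArrow W := by
  rcases h with ⟨_ | ⟨P, Ps⟩, hE, hcl⟩ | h
  · cases hE; exact .inl ⟨rfl, rfl⟩
  · cases hE; exact .inr ⟨Ps, rfl, fun k hk => hcl k (.inr hk)⟩
  · cases h

lemma of_arr {C W : Ty} (h : DeltaSpine (.arr C W)) : DeltaSpine W :=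
  h.arr_inv.elim (fun h => .inr h.2) .inl

lemma not_genClo_tyFalse {S : Ty} (hS : DeltaSpine S) : ¬ GenClo S tyFalse := fun h => by
  cases h with
  | refl => exact hS.notAll _ rfl
  | all h =>
    have hvar := h.eq_of_notAll nofun
    rcases hS with ⟨_ | _, rfl, _⟩ | rfl <;> cases hvar

end DeltaSpine

lemma IsDeltaArrow.closed {E : Ty} (h : IsDeltaArrow E) : TyClosed E := DeltaSpine.closed (.inl h)

lemma IsDeltaArrow.notAll {E : Ty} (h : IsDeltaArrow E) : NotAll E := DeltaSpine.notAll (.inl h)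

section Graft

variable {Γ₂ : List Ty}

theorem deltaSpine_of_le_headVar (hΓ₂ : ∀ E ∈ Γ₂, IsDeltaArrow E) {a : Trm} (ha : IsNormal a)
    (hnl : NotLam a) {Δ : List Ty} {W : Ty} (hh : Δ.length ≤ headVar a)
    (h : TypF (Δ ++ Γ₂) a W) : ∃ S, GenClo S W ∧ DeltaSpine S := by
  induction a generalizing Δ W with
  | var n =>
    obtain ⟨E, hmem, hE⟩ := h.exists_mem_of_var hh
    exact ⟨E, h.genClo_of_var hE (hΓ₂ E hmem).notAll, .inl (hΓ₂ E hmem)⟩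
  | app u v ihu _ =>
    obtain ⟨hu, -, hnlu⟩ := isNormal_app_iff.mp ha
    refine TypF.induction_append (map_liftTy_eq_self fun E hE => (hΓ₂ E hE).closed)
      (motive := fun Δ W => Δ.length ≤ headVar u → ∃ S, GenClo S W ∧ DeltaSpine S)
      ?_ ?_ ?_ h hh
    · rintro Δ W ⟨C, huC, -⟩ hh
      obtain ⟨S, hclo, hS⟩ := ihu hu hnlu hh huC
      obtain rfl := hclo.eq_of_notAll nofun
      exact ⟨W, .refl W, hS.of_arr⟩
    · rintro Δ A ih hh
      obtain ⟨S, hclo, hS⟩ := ih (by simpa using hh)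
      exact ⟨S, hclo.all_of_closed hS.closed, hS⟩
    · rintro Δ A G ih hh
      obtain ⟨S, hclo, hS⟩ := ih hh
      exact ⟨S, hclo.inst hS.notAll G, hS⟩
  | lam b => exact absurd rfl (hnl b)

/-- `a'` stands for `a` with its free variables `≥ n` eliminated. -/
def IsGraft (n : ℕ) (a a' : Trm) : Prop :=
  IsNormal a' ∧ ((∃ k, n ≤ k ∧ FreeIn k a) → F0Untypable a') ∧
    (NotLam a → headVar a < n → NotLam a')

def HasGraft (a : Trm) (Δ : List Ty) (W : Ty) : Prop := ∃ a', TypF Δ a' W ∧ IsGraft Δ.length a a'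

lemma HasGraft.all {a : Trm} {Δ : List Ty} {A : Ty} (h : HasGraft a (Δ.map (liftTy 1 0)) A) :
    HasGraft a Δ (.all A) :=
  let ⟨a', ha', hg⟩ := h
  ⟨a', .allI ha', by simpa using hg⟩

lemma HasGraft.inst {a : Trm} {Δ : List Ty} {A : Ty} (h : HasGraft a Δ (.all A)) (G : Ty) :
    HasGraft a Δ (substTy A 0 G) :=
  let ⟨a', ha', hg⟩ := h
  ⟨a', .allE G ha', hg⟩

/-- A spine `u v` headed by a variable of type `P₁ → … → Pₘ → (∀Y Y) → O` is replaced by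
`λxₖ₊₁…λxₘ.δ` when it carries `k ≤ m` arguments, and by `v' δ` when `v : ∀Y Y` is its last
argument. -/
lemma exists_f0Untypable_of_le_headVar (hΓ₂ : ∀ E ∈ Γ₂, IsDeltaArrow E) {u v : Trm}
    (hu : IsNormal u) (hnlu : NotLam u) (hv : IsNormal v) {Δ : List Ty} {C W : Ty}
    (hh : Δ.length ≤ headVar u) (huC : TypF (Δ ++ Γ₂) u (.arr C W)) (hvC : TypF (Δ ++ Γ₂) v C)
    (hgv : HasGraft v Δ C) : ∃ a', TypF Δ a' W ∧ IsNormal a' ∧ F0Untypable a' := by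
  obtain ⟨S, hclo, hS⟩ := deltaSpine_of_le_headVar hΓ₂ hu hnlu hh huC
  obtain rfl := hclo.eq_of_notAll nofun
  rcases hS.arr_inv with ⟨rfl, rfl⟩ | ⟨Ps, rfl, -⟩
  · have hnlv : NotLam v := by
      rintro b rfl
      cases hvC.lamTy with | all h => cases h
    have hhv : headVar v < Δ.length := by
      by_contra! hge
      obtain ⟨S, hclo, hS⟩ := deltaSpine_of_le_headVar hΓ₂ hv hnlv hge hvC
      exact hS.not_genClo_tyFalse hclo
    obtain ⟨v', hv', hv'n, -, hv'nl⟩ := hgv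
    exact ⟨.app v' delta, .app (hv'.of_tyFalse _) (typF_lamsDelta [] Δ),
      isNormal_app_iff.mpr ⟨hv'n, isNormal_delta, hv'nl hnlv hhv⟩,
      .app_right _ f0Untypable_delta⟩
  · exact ⟨lamsDelta Ps.length, typF_lamsDelta Ps Δ, isNormal_lamsDelta _, f0Untypable_lamsDelta _⟩

theorem hasGraft (hΓ₂ : ∀ E ∈ Γ₂, IsDeltaArrow E) {a : Trm} (ha : IsNormal a) {Δ : List Ty}
    {W : Ty} (h : TypF (Δ ++ Γ₂) a W) : HasGraft a Δ W := by
  have hΓ₂lift := map_liftTy_eq_self fun E hE => (hΓ₂ E hE).closed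
  induction a generalizing Δ W with
  | var n =>
    by_cases hn : n < Δ.length
    · refine ⟨.var n, h.strengthen fun k hk => hk ▸ hn, isNormal_var n, ?_, fun _ _ => nofun⟩
      rintro ⟨k, hk, rfl⟩
      omega
    · obtain ⟨E, hmem, hE⟩ := h.exists_mem_of_var (not_lt.mp hn)
      obtain ⟨Ps, rfl, hcl⟩ := hΓ₂ E hmem
      exact ⟨lamsDelta Ps.length,
        (h.genClo_of_var hE (hΓ₂ _ hmem).notAll).typF hcl (typF_lamsDelta Ps) Δ,
        isNormal_lamsDelta _, fun _ => f0Untypable_lamsDelta _, fun _ h => absurd h hn⟩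
  | lam b ih =>
    refine TypF.induction_append hΓ₂lift (motive := HasGraft (.lam b)) ?_
      (fun _ _ => HasGraft.all) (fun _ _ G h => h.inst G) h
    rintro Δ _ ⟨C, D, rfl, hb⟩
    obtain ⟨b', hb', hb'n, hb'f, -⟩ := ih (isNormal_lam_iff.mp ha) (Δ := C :: Δ) hb
    refine ⟨.lam b', .abs hb', isNormal_lam_iff.mpr hb'n, ?_, fun h => absurd rfl (h b)⟩
    rintro ⟨k, hk, hf⟩
    exact (hb'f ⟨k + 1, by simpa using hk, hf⟩).lam
  | app u v ihu ihv =>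
    obtain ⟨hu, hv, hnlu⟩ := isNormal_app_iff.mp ha
    refine TypF.induction_append hΓ₂lift (motive := HasGraft (.app u v)) ?_
      (fun _ _ => HasGraft.all) (fun _ _ G h => h.inst G) h
    rintro Δ W ⟨C, huC, hvC⟩
    by_cases hh : headVar u < Δ.length
    · obtain ⟨u', hu', hu'n, hu'f, hu'nl⟩ := ihu hu huC
      obtain ⟨v', hv', hv'n, hv'f, -⟩ := ihv hv hvC
      refine ⟨.app u' v', .app hu' hv', isNormal_app_iff.mpr ⟨hu'n, hv'n, hu'nl hnlu hh⟩, ?_,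
        fun _ _ => nofun⟩
      rintro ⟨k, hk, hf | hf⟩
      · exact (hu'f ⟨k, hk, hf⟩).app_left _
      · exact (hv'f ⟨k, hk, hf⟩).app_right _
    · obtain ⟨a', ha', ha'n, ha'u⟩ :=
        exists_f0Untypable_of_le_headVar hΓ₂ hu hnlu hv (not_lt.mp hh) huC hvC (ihv hv hvC)
      exact ⟨a', ha', ha'n, fun _ => ha'u, fun _ h => absurd h hh⟩

end Graft

@[simp] lemma mkArr_nil (T : Ty) : mkArr [] T = T := rfl

@[simp] lemma mkArr_cons (P : Ty) (Ps : List Ty) (T : Ty) :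
    mkArr (P :: Ps) T = .arr P (mkArr Ps T) := rfl

lemma tyFreeIn_mkArr {k : ℕ} {Ps : List Ty} {T : Ty} :
    TyFreeIn k (mkArr Ps T) ↔ (∃ P ∈ Ps, TyFreeIn k P) ∨ TyFreeIn k T := by
  induction Ps with
  | nil => simp
  | cons P Ps ih => simp only [mkArr_cons, TyFreeIn, ih, List.mem_cons, exists_eq_or_imp, or_assoc]

@[simp] lemma liftTy_mkArr (d k : ℕ) (Ps : List Ty) (T : Ty) :
    liftTy d k (mkArr Ps T) = mkArr (Ps.map (liftTy d k)) (liftTy d k T) := by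
  induction Ps <;> simp_all [liftTy]

@[simp] lemma substTy_mkArr (k : ℕ) (G : Ty) (Ps : List Ty) (T : Ty) :
    substTy (mkArr Ps T) k G = mkArr (Ps.map (substTy · k G)) (substTy T k G) := by
  induction Ps <;> simp_all [substTy]

lemma notAll_mkArr_var (Ps : List Ty) (d : ℕ) : NotAll (mkArr Ps (.var d)) := by
  cases Ps <;> nofun

lemma tyClosed_tyDelta : TyClosed tyDelta := by
  simp [TyClosed, tyDelta, tyFalse, tyO, TyFreeIn]

/-- Constructor types `P₁ → … → Pₘ → X`, the type variable `X` having index `d`. -/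
def IsCtorTy (d : ℕ) (U : Ty) : Prop :=
  ∃ Ps, U = mkArr Ps (.var d) ∧ ∀ P ∈ Ps, P = .var d ∨ IsInputType P

namespace IsCtorTy

variable {d : ℕ}

lemma notAll {U : Ty} (h : IsCtorTy d U) : NotAll U :=
  let ⟨Ps, hU, _⟩ := h
  hU ▸ notAll_mkArr_var Ps d

lemma tyFreeIn {U : Ty} (h : IsCtorTy d U) {k : ℕ} (hk : TyFreeIn k U) : k = d := by
  obtain ⟨Ps, rfl, hPs⟩ := h
  rcases tyFreeIn_mkArr.mp hk with ⟨P, hP, hk⟩ | hk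
  · rcases hPs P hP with rfl | hP
    · exact hk.symm
    · exact absurd hk (hP.1 k)
  · exact hk.symm

lemma arr_inv {C W : Ty} (h : IsCtorTy d (.arr C W)) :
    (C = .var d ∨ IsInputType C) ∧ IsCtorTy d W := by
  obtain ⟨_ | ⟨P, Ps⟩, hE, hPs⟩ := h
  · cases hE
  · obtain ⟨rfl, rfl⟩ := Ty.arr.inj hE
    exact ⟨hPs C (.head _), Ps, rfl, fun Q hQ => hPs Q (.tail _ hQ)⟩

lemma lift {S : Ty} (h : IsCtorTy d S) : IsCtorTy (d + 1) (liftTy 1 0 S) := by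
  obtain ⟨Ps, rfl, hPs⟩ := h
  refine ⟨Ps.map (liftTy 1 0), by simp [liftTy], ?_⟩
  simp only [List.mem_map]
  rintro _ ⟨P, hP, rfl⟩
  rcases hPs P hP with rfl | hP
  · exact .inl (by simp [liftTy])
  · exact .inr (by rwa [hP.1.liftTy_eq])

lemma exists_eq_liftTy {S' : Ty} (h : IsCtorTy (d + 1) S') :
    ∃ S, S' = liftTy 1 0 S ∧ IsCtorTy d S := by
  obtain ⟨Ps, rfl, hPs⟩ := h
  have hunlift : ∀ P ∈ Ps, liftTy 1 0 (substTy P 0 (.var 0)) = P ∧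
      (substTy P 0 (.var 0) = .var d ∨ IsInputType (substTy P 0 (.var 0))) := fun P hP => by
    rcases hPs P hP with rfl | hP
    · simp [substTy, liftTy]
    · simp [hP.1.substTy_eq, hP.1.liftTy_eq, hP]
  refine ⟨mkArr (Ps.map (substTy · 0 (.var 0))) (.var d), ?_, _, rfl, ?_⟩
  · have hmap : (Ps.map (substTy · 0 (.var 0))).map (liftTy 1 0) = Ps := by
      simp only [List.map_map, Function.comp_def]
      exact (List.map_congr_left fun P hP => (hunlift P hP).1).trans (List.map_id Ps)
    rw [liftTy_mkArr, hmap]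
    simp [liftTy]
  · simpa using fun P hP => (hunlift P hP).2

lemma substTy_tyDelta {U : Ty} (h : IsCtorTy d U) : IsDeltaArrow (substTy U d tyDelta) := by
  obtain ⟨Ps, rfl, hPs⟩ := h
  have hX : substTy (.var d) d tyDelta = tyDelta := by
    simpa [substTy] using tyClosed_tyDelta.liftTy_eq d 0
  refine ⟨Ps.map (substTy · d tyDelta), by simp [hX], fun k hk => ?_⟩
  rw [substTy_mkArr, hX, tyFreeIn_mkArr] at hk
  rcases hk with ⟨_, hP', hk⟩ | hk
  · obtain ⟨P, hP, rfl⟩ := List.mem_map.mp hP'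
    rcases hPs P hP with rfl | hP
    · rw [hX] at hk
      exact tyClosed_tyDelta k hk
    · rw [hP.1.substTy_eq] at hk
      exact hP.1 k hk
  · exact tyClosed_tyDelta k hk

end IsCtorTy

theorem TypF.typF0_of_isInputType {C : Ty} (hC : IsInputType C) {Γ : List Ty} {d : ℕ}
    (hΓ : ∀ U ∈ Γ, IsCtorTy d U) {v : Trm} (hv : IsNormal v) (h : TypF Γ v C) : TypF0 Γ v C := by
  by_cases hfree : ∃ k, FreeIn k v
  · obtain ⟨k, hk⟩ := hfree
    have h₂ : TypF ([] ++ Γ.map (substTy · d tyDelta)) v C := by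
      simpa [hC.1.substTy_eq] using h.map_substTy d tyDelta
    have hΓ₂ : ∀ E ∈ Γ.map (substTy · d tyDelta), IsDeltaArrow E := by
      simpa using fun U hU => (hΓ U hU).substTy_tyDelta
    obtain ⟨v', hv', hv'n, hv'u, -⟩ := hasGraft hΓ₂ hv h₂
    exact absurd (hC.2 v' hv'n hv') (hv'u ⟨k, Nat.zero_le k, hk⟩ [] C)
  · push Not at hfree
    have h₀ : TypF [] v C := TypF.strengthen (Γ := Γ) h fun k hk => absurd hk (hfree k)
    simpa using (hC.2 v hv h₀).append Γ

def HasF0CtorTy (t : Trm) (d : ℕ) (Γ : List Ty) (W : Ty) : Prop :=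
  ∃ S, GenClo S W ∧ IsCtorTy d S ∧ TypF0 Γ t S

namespace HasF0CtorTy

variable {t : Trm} {d : ℕ} {Γ : List Ty}

lemma all {A : Ty} (h : HasF0CtorTy t (d + 1) (Γ.map (liftTy 1 0)) A) :
    HasF0CtorTy t d Γ (.all A) := by
  obtain ⟨S₁, hclo, hS₁, h₀⟩ := h
  obtain ⟨S, rfl, hS⟩ := hS₁.exists_eq_liftTy
  exact ⟨S, .all hclo, hS, h₀.unlift⟩

lemma inst {A : Ty} (h : HasF0CtorTy t d Γ (.all A)) (G : Ty) :
    HasF0CtorTy t d Γ (substTy A 0 G) :=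
  let ⟨S, hclo, hS, h₀⟩ := h
  ⟨S, hclo.inst hS.notAll G, hS, h₀⟩

lemma typF0 {W : Ty} (h : HasF0CtorTy t d Γ W)
    (hW : ∃ Us, W = mkArr Us (.var d) ∧ ∀ U ∈ Us, IsCtorTy d U) : TypF0 Γ t W := by
  obtain ⟨S, hclo, -, h⟩ := h
  obtain ⟨Us, rfl, -⟩ := hW
  rwa [← hclo.eq_of_notAll (notAll_mkArr_var Us d)]

end HasF0CtorTy

theorem TypF.typF0_of_ctorCtx {t : Trm} (ht : IsNormal t) {Γ : List Ty} {d : ℕ} {W : Ty}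
    (hΓ : ∀ U ∈ Γ, IsCtorTy d U) (h : TypF Γ t W) :
    ((∃ Us, W = mkArr Us (.var d) ∧ ∀ U ∈ Us, IsCtorTy d U) → TypF0 Γ t W) ∧
      (NotLam t → HasF0CtorTy t d Γ W) := by
  induction t generalizing Γ d W with
  | var n =>
    have hE := List.getElem?_eq_getElem (h.freeIn_lt rfl)
    have hU := hΓ _ (List.mem_of_getElem? hE)
    have hS : HasF0CtorTy (.var n) d Γ W := ⟨_, h.genClo_of_var hE hU.notAll, hU, .var _ _ _ hE⟩
    exact ⟨hS.typF0, fun _ => hS⟩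
  | lam b ih =>
    refine ⟨?_, fun h => absurd rfl (h b)⟩
    rintro ⟨_ | ⟨U, Us⟩, rfl, hUs⟩
    · cases h.lamTy
    · cases h.lamTy with
      | arr hb =>
        refine .abs ((ih (isNormal_lam_iff.mp ht) ?_ hb).1
          ⟨Us, rfl, fun U' hU' => hUs U' (.tail _ hU')⟩)
        rintro U' (_ | ⟨_, hU'⟩)
        exacts [hUs U (.head _), hΓ U' hU']
  | app u v ihu ihv =>
    obtain ⟨hu, hv, hnlu⟩ := isNormal_app_iff.mp ht
    have hS : HasF0CtorTy (.app u v) d Γ W := by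
      refine TypF.induction_rule (t := .app u v)
        (motive := fun Γ W => ∀ d, (∀ U ∈ Γ, IsCtorTy d U) → HasF0CtorTy (.app u v) d Γ W)
        ?_ (fun Γ A ih d hΓ => (ih (d + 1) (by simpa using fun U hU => (hΓ U hU).lift)).all)
        (fun Γ A G ih d hΓ => (ih d hΓ).inst G) h d hΓ
      rintro Γ W ⟨C, huC, hvC⟩ d hΓ
      obtain ⟨S, hclo, hS, hu₀⟩ := (ihu hu hΓ huC).2 hnlu
      obtain rfl := hclo.eq_of_notAll nofun
      obtain ⟨hC, hW⟩ := hS.arr_inv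
      have hv₀ : TypF0 Γ v C := by
        rcases hC with rfl | hC
        · exact (ihv hv hΓ hvC).1 ⟨[], rfl, nofun⟩
        · exact hvC.typF0_of_isInputType hC hΓ hv
      exact ⟨W, .refl W, hW, .app hu₀ hv₀⟩
    exact ⟨hS.typF0, fun _ => hS⟩

theorem isInputType_all_mkArr {Us : List Ty} (hUs : ∀ U ∈ Us, IsCtorTy 0 U) :
    IsInputType (.all (mkArr Us (.var 0))) := by
  refine ⟨fun k hk => ?_, fun t ht h => ?_⟩
  · rcases tyFreeIn_mkArr.mp hk with ⟨U, hU, hk⟩ | hk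
    · exact absurd ((hUs U hU).tyFreeIn hk) (Nat.succ_ne_zero k)
    · exact Nat.succ_ne_zero k hk.symm
  · obtain ⟨b, rfl⟩ : ∃ b, t = .lam b := by
      by_contra! hnl
      exact Nat.not_lt_zero _ (h.freeIn_lt (freeIn_headVar ht fun b hb => hnl b hb))
    cases h.lamTy with
    | all hb => exact .allI ((hb.typF.typF0_of_ctorCtx ht (by simp)).1 ⟨Us, rfl, hUs⟩)

/-- if `A` and `B` are input types, then `A ∧ B`, `A ∨ B`
and `LA` are input types. -/
theorem input_closed_under_and_or_list (A B : Ty)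
    (hA : IsInputType A) (hB : IsInputType B) :
    IsInputType (tyAnd A B) ∧ IsInputType (tyOr A B) ∧
      IsInputType (tyList A) := by
  have hA₁ := hA.1.liftTy_eq 1 0
  have hB₁ := hB.1.liftTy_eq 1 0
  refine ⟨?_, ?_, ?_⟩
  · have := isInputType_all_mkArr (Us := [mkArr [A, B] (.var 0)])
      (by simpa using ⟨[A, B], rfl, by simp [hA, hB]⟩)
    simpa [tyAnd, hA₁, hB₁] using this
  · have := isInputType_all_mkArr (Us := [mkArr [A] (.var 0), mkArr [B] (.var 0)])
      (by simpa using ⟨⟨[A], rfl, by simp [hA]⟩, ⟨[B], rfl, by simp [hB]⟩⟩)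
    simpa [tyOr, hA₁, hB₁] using this
  · have := isInputType_all_mkArr (Us := [.var 0, mkArr [A, .var 0] (.var 0)])
      (by simpa using ⟨⟨[], rfl, nofun⟩, ⟨[A, .var 0], rfl, by simp [hA]⟩⟩)
    simpa [tyList, hA₁] using this

end FarkhNour
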